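/- Let μ be a nontrivial positive measure on the unit circle with CD kernels K_n. If |w| = 1, then every zero z of the polynomial z ↦ K_n(z,w;μ) satisfies |z| = 1. -/

import Mathlib

open MeasureTheory Complex Polynomial

/-- The Christoffel–Darboux kernel built from a family of polynomials. -/
noncomputable def CDkernel (φ : ℕ → Polynomial ℂ) (n : ℕ) (z w : ℂ) : ℂ :=
  ∑ j ∈ Finset.range (n + 1), (starRingEnd ℂ) ((φ j).eval w) * (φ j).eval z

/-- `φ` is the sequence of orthonormal polynomials (with positive leading coefficients)
of the measure `μ` on the unit circle. -/
def IsOPUC (μ : Measure ℂ) (φ : ℕ → Polynomial ℂ) : Prop :=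
  (∀ n, (φ n).degree = n) ∧
  (∀ n, 0 < ((φ n).leadingCoeff).re ∧ ((φ n).leadingCoeff).im = 0) ∧
  (∀ m n, ∫ ζ, (starRingEnd ℂ) ((φ m).eval ζ) * (φ n).eval ζ ∂μ =
    if m = n then 1 else 0)

open scoped InnerProductSpace ComplexConjugate

/-!
`K_n(·, w)` reproduces the polynomials of degree `≤ n` in `L²(μ)`: `⟪K_n(·, w), s⟫ = s(w)`.
In particular `⟪K_n(·, w), K_n(·, w)⟫ = K_n(w, w)`, so a polynomial of degree `≤ n` with the same
value at `w` and the same `L²(μ)` norm as `K_n(·, w)` is `K_n(·, w)` itself (expand the square of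
the distance between them). If `K_n(z, w) = 0` with `|z| ≠ 1`, trading the factor `X - z` for a
multiple of `1 - conj z X` yields such a polynomial, because `|1 - conj z ζ| = |ζ - z|` on the unit
circle (where `μ` lives); but its zero has moved from `z` to `1 / conj z`, a contradiction.
-/

theorem eq_of_inner_eq_inner_self_of_norm_eq {𝕜 E : Type*} [RCLike 𝕜] [NormedAddCommGroup E]
    [InnerProductSpace 𝕜 E] {x y : E} (hinner : ⟪x, y⟫_𝕜 = ⟪x, x⟫_𝕜) (hnorm : ‖y‖ = ‖x‖) :
    y = x := by
  have hsq : ‖y - x‖ ^ 2 = 0 := by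
    rw [@norm_sub_sq 𝕜, inner_re_symm, hinner, inner_self_eq_norm_sq, hnorm]
    ring
  simpa [sub_eq_zero] using hsq

section UnitCircle

theorem norm_one_sub_conj_mul_eq_norm_sub {u v : ℂ} (hu : ‖u‖ = 1) :
    ‖1 - conj v * u‖ = ‖u - v‖ := by
  have hunit : u * conj u = 1 := by rw [mul_conj', hu, ofReal_one, one_pow]
  calc ‖1 - conj v * u‖ = ‖u * conj (u - v)‖ := by rw [map_sub, mul_sub, hunit, mul_comm]
    _ = ‖u - v‖ := by rw [norm_mul, hu, one_mul, RCLike.norm_conj]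

variable {z w : ℂ} (hw : ‖w‖ = 1) (hz : ‖z‖ ≠ 1)
include hw hz

theorem one_sub_conj_mul_ne_zero : 1 - conj z * w ≠ 0 := by
  rw [← norm_ne_zero_iff, norm_one_sub_conj_mul_eq_norm_sub hw, norm_ne_zero_iff, sub_ne_zero]
  rintro rfl
  exact hz hw

theorem norm_sub_div_one_sub_conj_mul : ‖(w - z) / (1 - conj z * w)‖ = 1 := by
  rw [norm_div, ← norm_one_sub_conj_mul_eq_norm_sub hw,
    div_self (norm_ne_zero_iff.2 (one_sub_conj_mul_ne_zero hw hz))]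

end UnitCircle

namespace Polynomial

theorem eq_zero_of_ae_eval_eq_zero {μ : Measure ℂ}
    (hμ : Set.Infinite {ζ : ℂ | ∀ ε > 0, μ (Metric.ball ζ ε) ≠ 0})
    {p : ℂ[X]} (hp : ∀ᵐ ζ ∂μ, p.eval ζ = 0) : p = 0 := by
  refine eq_zero_of_infinite_isRoot p (hμ.mono fun ζ hζ => ?_)
  by_contra hne
  obtain ⟨ε, hε, hball⟩ := Metric.isOpen_iff.mp (isOpen_ne_fun p.continuous continuous_const) ζ hne
  exact hζ ε hε (measure_mono_null hball (ae_iff.mp hp))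

section L2

variable {μ : Measure ℂ} [IsFiniteMeasure μ] {S : Set ℂ} (hS : IsCompact S) (hμS : ∀ᵐ ζ ∂μ, ζ ∈ S)
include hS hμS

theorem memLp_eval (p : ℂ[X]) : MemLp (fun ζ => p.eval ζ) 2 μ := by
  obtain ⟨C, hC⟩ := hS.exists_bound_of_continuousOn p.continuous.continuousOn
  exact MemLp.of_bound p.continuous.aestronglyMeasurable C (hμS.mono hC)

noncomputable def toL2 : ℂ[X] →ₗ[ℂ] Lp ℂ 2 μ where
  toFun p := (memLp_eval hS hμS p).toLp _
  map_add' f g := by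
    rw [← MemLp.toLp_add]
    exact (MemLp.toLp_eq_toLp_iff _ _).2 (.of_forall fun ζ => eval_add)
  map_smul' c f := by
    rw [RingHom.id_apply, ← MemLp.toLp_const_smul]
    exact (MemLp.toLp_eq_toLp_iff _ _).2 (.of_forall fun ζ => eval_smul ..)

theorem toL2_ae_eq (p : ℂ[X]) : toL2 hS hμS p =ᵐ[μ] fun ζ => p.eval ζ :=
  MemLp.coeFn_toLp (memLp_eval hS hμS p)

theorem inner_toL2 (f g : ℂ[X]) :
    ⟪toL2 hS hμS f, toL2 hS hμS g⟫_ℂ = ∫ ζ, conj (f.eval ζ) * g.eval ζ ∂μ := by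
  rw [L2.inner_def]
  refine integral_congr_ae ?_
  filter_upwards [toL2_ae_eq hS hμS f, toL2_ae_eq hS hμS g] with ζ hf hg
  rw [hf, hg, RCLike.inner_apply, mul_comm]

theorem norm_toL2_eq_of_ae_norm_eq {f g : ℂ[X]} (h : ∀ᵐ ζ ∂μ, ‖f.eval ζ‖ = ‖g.eval ζ‖) :
    ‖toL2 hS hμS f‖ = ‖toL2 hS hμS g‖ := by
  rw [Lp.norm_def, Lp.norm_def, eLpNorm_congr_ae (toL2_ae_eq hS hμS f),
    eLpNorm_congr_ae (toL2_ae_eq hS hμS g), eLpNorm_congr_norm_ae h]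

theorem toL2_injective (hμ : Set.Infinite {ζ : ℂ | ∀ ε > 0, μ (Metric.ball ζ ε) ≠ 0}) :
    Function.Injective (toL2 hS hμS) := by
  refine (injective_iff_map_eq_zero _).2 fun p hp => eq_zero_of_ae_eval_eq_zero hμ ?_
  filter_upwards [toL2_ae_eq hS hμS p, Lp.coeFn_zero ℂ 2 μ] with ζ h h0
  rw [← h, hp, h0, Pi.zero_apply]

end L2

section Kernel

variable {μ : Measure ℂ} [IsFiniteMeasure μ] {S : Set ℂ} {hS : IsCompact S}
  {hμS : ∀ᵐ ζ ∂μ, ζ ∈ S} {φ : ℕ → ℂ[X]}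

theorem orthonormal_toL2_comp
    (hφ : ∀ m n, ∫ ζ, conj ((φ m).eval ζ) * (φ n).eval ζ ∂μ = if m = n then 1 else 0) :
    Orthonormal ℂ (toL2 hS hμS ∘ φ) :=
  orthonormal_iff_ite.2 fun m n => by rw [Function.comp_apply, Function.comp_apply, inner_toL2, hφ]

noncomputable def cdKernelPoly (φ : ℕ → ℂ[X]) (n : ℕ) (w : ℂ) : ℂ[X] :=
  ∑ j ∈ Finset.range (n + 1), conj ((φ j).eval w) • φ j

theorem eval_cdKernelPoly (n : ℕ) (z w : ℂ) : (cdKernelPoly φ n w).eval z = CDkernel φ n z w := by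
  simp [cdKernelPoly, CDkernel, eval_finsetSum]

theorem cdKernelPoly_mem_degreeLE (hdeg : ∀ j, (φ j).degree = j) (n : ℕ) (w : ℂ) :
    cdKernelPoly φ n w ∈ degreeLE ℂ n :=
  Submodule.sum_mem _ fun j hj => Submodule.smul_mem _ _ <| mem_degreeLE.2 <| by
    rw [hdeg j]
    exact_mod_cast Finset.mem_range_succ_iff.1 hj

theorem inner_toL2_cdKernelPoly (hdeg : ∀ j, (φ j).degree = j)
    (hφ : Orthonormal ℂ (toL2 hS hμS ∘ φ)) {n : ℕ} (w : ℂ) {s : ℂ[X]} (hs : s ∈ degreeLE ℂ n) :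
    ⟪toL2 hS hμS (cdKernelPoly φ n w), toL2 hS hμS s⟫_ℂ = s.eval w := by
  let P : Sequence ℂ := ⟨φ, hdeg⟩
  rw [← P.span_degreeLE fun i _ => (leadingCoeff_ne_zero.2 (P.ne_zero i)).isUnit] at hs
  refine LinearMap.eqOn_span' (g := leval w)
    (f := (innerₛₗ ℂ (toL2 hS hμS (cdKernelPoly φ n w))).comp (toL2 hS hμS)) ?_ hs
  rintro _ ⟨j, hj, rfl⟩
  have hj' : j ∈ Finset.range (n + 1) := Finset.mem_range_succ_iff.2 hj
  change ⟪toL2 hS hμS (cdKernelPoly φ n w), toL2 hS hμS (φ j)⟫_ℂ = (φ j).eval w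
  simp only [cdKernelPoly, map_sum, map_smul]
  exact (hφ.inner_left_sum (fun i => conj ((φ i).eval w)) hj').trans (conj_conj _)

theorem cdKernelPoly_ne_zero (hdeg : ∀ j, (φ j).degree = j)
    (hφ : Orthonormal ℂ (toL2 hS hμS ∘ φ)) (n : ℕ) (w : ℂ) : cdKernelPoly φ n w ≠ 0 := by
  intro h
  have hφ0 : φ 0 ∈ degreeLE ℂ n := mem_degreeLE.2 (by rw [hdeg 0]; exact_mod_cast n.zero_le)
  have hroot := inner_toL2_cdKernelPoly hdeg hφ w hφ0
  rw [h, map_zero, inner_zero_left] at hroot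
  have := degree_pos_of_root (Sequence.ne_zero ⟨φ, hdeg⟩ 0) hroot.symm
  simp [hdeg 0] at this

theorem eq_cdKernelPoly_of_norm_toL2_eq
    (hμ : Set.Infinite {ζ : ℂ | ∀ ε > 0, μ (Metric.ball ζ ε) ≠ 0})
    (hdeg : ∀ j, (φ j).degree = j) (hφ : Orthonormal ℂ (toL2 hS hμS ∘ φ)) {n : ℕ} {w : ℂ}
    {s : ℂ[X]} (hs : s ∈ degreeLE ℂ n) (hsw : s.eval w = (cdKernelPoly φ n w).eval w)
    (hnorm : ‖toL2 hS hμS s‖ = ‖toL2 hS hμS (cdKernelPoly φ n w)‖) : s = cdKernelPoly φ n w := by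
  refine toL2_injective hS hμS hμ (eq_of_inner_eq_inner_self_of_norm_eq (𝕜 := ℂ) ?_ hnorm)
  rw [inner_toL2_cdKernelPoly hdeg hφ w hs,
    inner_toL2_cdKernelPoly hdeg hφ w (cdKernelPoly_mem_degreeLE hdeg n w), hsw]

end Kernel

section Reflection

/-- `(X - z) * q` with the zero `z` moved to its reflection `1 / conj z` in the unit circle,
rescaled so that the value at `w` is unchanged. -/
noncomputable def reflectZero (z w : ℂ) (q : ℂ[X]) : ℂ[X] :=
  C ((w - z) / (1 - conj z * w)) * (1 - C (conj z) * X) * q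

theorem degree_reflectZero_le {z w : ℂ} (q : ℂ[X]) :
    (reflectZero z w q).degree ≤ ((X - C z) * q).degree := by
  rw [reflectZero, degree_mul (q := q), degree_mul (q := q), degree_X_sub_C]
  gcongr
  compute_degree

variable {z w : ℂ} (hw : ‖w‖ = 1) (hz : ‖z‖ ≠ 1)
include hw hz

theorem eval_reflectZero_self (q : ℂ[X]) :
    (reflectZero z w q).eval w = ((X - C z) * q).eval w := by
  simp only [reflectZero, eval_mul, eval_C, eval_sub, eval_one, eval_X,
    div_mul_cancel₀ _ (one_sub_conj_mul_ne_zero hw hz)]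

theorem norm_eval_reflectZero (q : ℂ[X]) {ζ : ℂ} (hζ : ‖ζ‖ = 1) :
    ‖(reflectZero z w q).eval ζ‖ = ‖((X - C z) * q).eval ζ‖ := by
  simp only [reflectZero, eval_mul, eval_C, eval_sub, eval_one, eval_X, norm_mul,
    norm_sub_div_one_sub_conj_mul hw hz, one_mul, norm_one_sub_conj_mul_eq_norm_sub hζ]

theorem reflectZero_ne {q : ℂ[X]} (hq : q ≠ 0) : reflectZero z w q ≠ (X - C z) * q := by
  intro h
  have hfactor := congrArg (eval z) (mul_right_cancel₀ hq h)
  simp only [eval_mul, eval_C, eval_sub, eval_one, eval_X, sub_self] at hfactor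
  have hscale : (w - z) / (1 - conj z * w) ≠ 0 := by
    rw [← norm_ne_zero_iff, norm_sub_div_one_sub_conj_mul hw hz]
    exact one_ne_zero
  rw [mul_eq_zero_iff_left hscale, sub_eq_zero, conj_mul', eq_comm] at hfactor
  exact hz ((pow_eq_one_iff_of_nonneg (norm_nonneg z) two_ne_zero).1 (by exact_mod_cast hfactor))

end Reflection

end Polynomial

/-- If `|w| = 1`, every zero of `z ↦ K_n(z,w;μ)` lies on the unit circle. -/
theorem cd_kernel_zeros_on_circle
    (μ : Measure ℂ) [IsFiniteMeasure μ]
    (hcirc : ∀ᵐ ζ ∂μ, ‖ζ‖ = 1)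
    (hnt : Set.Infinite {ζ : ℂ | ∀ ε > 0, μ (Metric.ball ζ ε) ≠ 0})
    (φ : ℕ → Polynomial ℂ) (hφ : IsOPUC μ φ)
    (n : ℕ) (w : ℂ) (hw : ‖w‖ = 1)
    (z : ℂ) (hz : CDkernel φ n z w = 0) :
    ‖z‖ = 1 := by
  obtain ⟨hdeg, -, horth⟩ := hφ
  have hμS : ∀ᵐ ζ ∂μ, ζ ∈ Metric.sphere (0 : ℂ) 1 := by simpa using hcirc
  have hON := orthonormal_toL2_comp (hS := isCompact_sphere 0 1) (hμS := hμS) horth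
  by_contra hz1
  obtain ⟨q, hq⟩ : X - C z ∣ cdKernelPoly φ n w :=
    dvd_iff_isRoot.2 (by rw [IsRoot, eval_cdKernelPoly, hz])
  have hq0 : q ≠ 0 := by
    rintro rfl
    exact cdKernelPoly_ne_zero hdeg hON n w (by rw [hq, mul_zero])
  refine reflectZero_ne hw hz1 hq0 (hq ▸ eq_cdKernelPoly_of_norm_toL2_eq hnt hdeg hON ?_ ?_ ?_)
  · exact mem_degreeLE.2 ((degree_reflectZero_le q).trans
      (hq ▸ mem_degreeLE.1 (cdKernelPoly_mem_degreeLE hdeg n w)))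
  · rw [hq, eval_reflectZero_self hw hz1]
  · rw [hq]
    exact norm_toL2_eq_of_ae_norm_eq _ _ (hcirc.mono fun ζ => norm_eval_reflectZero hw hz1 q)
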